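/- For j = 1,...,n let F_j be the equal-revenue distribution truncated at 2^{j+1}, and assume the buyer breaks ties among items with equal utility consistently in favor of the higher-priced item. Then for every k ≥ 1, every pricing p that uses at most k distinct finite prices satisfies R(p) ≤ R(p, F^com) ≤ k, where F^com is the comonotonic distribution. Consequently, since R* ≥ n/3 for this instance, no pricing with at most k distinct prices is better than Θ(n/k)-max-min optimal. -/

import Mathlib

/-!
Under the comonotonic coupling every value is a function of a single uniform quantile `q`, and
for marginals with tails `Pr[v > x] ≤ 1/x` every value is at most `(1 - q)⁻¹`. Hence a finite
price `c` can only be paid when `q ≥ 1 - 1/c`, so each distinct price contributes at most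
`c · (1/c) = 1` to the revenue.

For `R* ≥ n/3`, price item `i` at two thirds of its cap `2^(i+2)`. If some items sit at their
caps, the buyer buys an item priced at least as high as the highest capped one, and that price
dominates the sum of `2^(i+2)/3` over all capped items `i`. Item `i` is capped with probability
`2^-(i+2)` under every compatible coupling, so the expected revenue is at least `n/3`.
-/

open MeasureTheory
open scoped ENNReal NNReal

noncomputable section

/-- A buyer's purchase rule for `n` items: given a valuation profile and a vector of item prices
(in `[0,∞]`), `choose` returns the purchased item (or `none` if nothing is purchased).
The axioms say: a purchased item has a finite price and yields nonnegative utility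
(`feasible`), the purchased item maximizes utility among all items (`optimal`), and the buyer
does purchase whenever some item yields nonnegative utility (`active`). Ties among
utility-maximizing items are broken according to the (fixed) rule embodied by `choose`. -/
structure BuyerRule (n : ℕ) where
  choose : (Fin n → ℝ) → (Fin n → ℝ≥0∞) → Option (Fin n)
  feasible : ∀ v p j, choose v p = some j → p j ≠ ⊤ ∧ (p j).toReal ≤ v j
  optimal : ∀ v p j k, choose v p = some j → p k ≠ ⊤ →
      v k - (p k).toReal ≤ v j - (p j).toReal
  active : ∀ v p, (∃ k, p k ≠ ⊤ ∧ (p k).toReal ≤ v k) → (choose v p).isSome = true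

/-- The seller's revenue from valuation profile `v` under pricing `p`. -/
def BuyerRule.revenue {n : ℕ} (B : BuyerRule n) (p : Fin n → ℝ≥0∞) (v : Fin n → ℝ) : ℝ≥0∞ :=
  (B.choose v p).elim 0 (fun j => p j)

/-- A joint distribution `F` on valuation profiles is compatible with the marginals `marg`
if it is a probability measure whose `j`-th one-dimensional marginal is `marg j` for every `j`. -/
def Compatible {n : ℕ} (marg : Fin n → Measure ℝ) (F : Measure (Fin n → ℝ)) : Prop :=
  IsProbabilityMeasure F ∧ ∀ j, F.map (fun v => v j) = marg j

/-- `R(p,F)`: the expected revenue of pricing `p` under joint distribution `F`. -/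
def expRev {n : ℕ} (B : BuyerRule n) (p : Fin n → ℝ≥0∞) (F : Measure (Fin n → ℝ)) : ℝ≥0∞ :=
  ∫⁻ v, B.revenue p v ∂F

/-- `R(p)`: the robust revenue guarantee of `p`, the infimum of `R(p,F)` over compatible `F`. -/
def robustRev {n : ℕ} (B : BuyerRule n) (marg : Fin n → Measure ℝ) (p : Fin n → ℝ≥0∞) : ℝ≥0∞ :=
  ⨅ (F : Measure (Fin n → ℝ)) (_ : Compatible marg F), expRev B p F

/-- `R*`: the optimal robust revenue guarantee over all pricings. -/
def optRobust {n : ℕ} (B : BuyerRule n) (marg : Fin n → Measure ℝ) : ℝ≥0∞ :=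
  ⨆ p : Fin n → ℝ≥0∞, robustRev B marg p

/-- The equal-revenue distribution truncated at `t`: the distribution of `min(X, t)` where
`Pr[X > x] = 1/x` for `x ≥ 1`. It has density `1/x²` on `[1, t)` and an atom of mass `1/t`
at `t`. -/
def erTrunc (t : ℝ) : Measure ℝ :=
  (volume.restrict (Set.Ico 1 t)).withDensity (fun x => ENNReal.ofReal (x ^ 2)⁻¹)
    + ENNReal.ofReal t⁻¹ • Measure.dirac t

/-- `F⁻¹(q)`: the value of `μ` at quantile `q`, i.e. `min {v : F(v) ≥ q}`. -/
def quantileFn (μ : Measure ℝ) (q : ℝ) : ℝ :=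
  sInf {v : ℝ | q ≤ (μ (Set.Iic v)).toReal}

/-- The comonotonic joint distribution compatible with the marginals `marg`: draw a single
quantile `q` uniformly from `[0,1]` and set `v_j = min {v : F_j(v) ≥ q}` for every item `j`. -/
def comon {n : ℕ} (marg : Fin n → Measure ℝ) : Measure (Fin n → ℝ) :=
  (volume.restrict (Set.Icc (0 : ℝ) 1)).map (fun q => fun j => quantileFn (marg j) q)

open Set Filter Topology ProbabilityTheory

section EqualRevenue

lemma lintegral_inv_sq_Ioc {a b : ℝ} (ha : 0 < a) (hab : a ≤ b) :
    ∫⁻ x in Ioc a b, ENNReal.ofReal (x ^ 2)⁻¹ = ENNReal.ofReal (a⁻¹ - b⁻¹) := by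
  have hcont : ContinuousOn (fun x : ℝ => (x ^ 2)⁻¹) (Icc a b) :=
    ContinuousOn.inv₀ (by fun_prop) fun x hx => pow_ne_zero 2 (ha.trans_le hx.1).ne'
  rw [← ofReal_integral_eq_lintegral_ofReal (hcont.integrableOn_Icc.mono_set Ioc_subset_Icc_self)
    (Eventually.of_forall fun x => by positivity), ← intervalIntegral.integral_of_le hab]
  have h0 : (0 : ℝ) ∉ uIcc a b := by rw [uIcc_of_le hab]; exact fun h => h.1.not_gt ha
  have hzpow : ∀ x : ℝ, (x ^ 2)⁻¹ = x ^ (-2 : ℤ) := fun x => by simp [zpow_neg]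
  simp_rw [hzpow]
  rw [integral_zpow (Or.inr ⟨by norm_num, h0⟩)]
  norm_num
  congr 1
  ring

lemma erTrunc_apply {t : ℝ} {s : Set ℝ} (hs : MeasurableSet s) :
    erTrunc t s = (∫⁻ x in s ∩ Ico 1 t, ENNReal.ofReal (x ^ 2)⁻¹)
      + ENNReal.ofReal t⁻¹ * s.indicator 1 t := by
  rw [erTrunc, Measure.add_apply, Measure.smul_apply, smul_eq_mul,
    withDensity_apply _ hs, Measure.restrict_restrict hs, Measure.dirac_apply' _ hs]

lemma Ioi_inter_Ico {α : Type*} [LinearOrder α] {a b c : α} (hba : b ≤ a) :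
    Ioi a ∩ Ico b c = Ioo a c := by
  ext x
  simp only [mem_inter_iff, mem_Ioi, mem_Ico, mem_Ioo]
  grind

lemma erTrunc_singleton (t : ℝ) : erTrunc t {t} = ENNReal.ofReal t⁻¹ := by
  rw [erTrunc_apply (measurableSet_singleton t), singleton_inter_eq_empty.2 fun h => h.2.false]
  simp

lemma erTrunc_Ioi_self (t : ℝ) : erTrunc t (Ioi t) = 0 := by
  rw [erTrunc_apply measurableSet_Ioi,
    eq_empty_of_forall_notMem fun x (hx : x ∈ Ioi t ∩ Ico 1 t) => (hx.1.trans hx.2.2).false]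
  simp

lemma isProbabilityMeasure_erTrunc {t : ℝ} (ht : 1 ≤ t) : IsProbabilityMeasure (erTrunc t) := by
  constructor
  rw [erTrunc_apply MeasurableSet.univ, univ_inter, setLIntegral_congr Ico_ae_eq_Ioc,
    lintegral_inv_sq_Ioc one_pos ht, indicator_of_mem (mem_univ t), Pi.one_apply, mul_one,
    ← ENNReal.ofReal_add (by simpa using inv_le_one_of_one_le₀ ht) (by positivity)]
  simp

lemma erTrunc_Ioi_le {t x : ℝ} (hx : 1 ≤ x) : erTrunc t (Ioi x) ≤ ENNReal.ofReal x⁻¹ := by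
  rcases le_or_gt t x with htx | hxt
  · simp [measure_mono_null (Ioi_subset_Ioi htx) (erTrunc_Ioi_self t)]
  have hx0 : 0 < x := zero_lt_one.trans_le hx
  rw [erTrunc_apply measurableSet_Ioi, Ioi_inter_Ico hx,
    setLIntegral_congr Ioo_ae_eq_Ioc, lintegral_inv_sq_Ioc hx0 hxt.le,
    indicator_of_mem (mem_Ioi.2 hxt), Pi.one_apply, mul_one,
    ← ENNReal.ofReal_add (sub_nonneg.2 (inv_anti₀ hx0 hxt.le)) (inv_nonneg.2 (hx0.trans hxt).le)]
  simp

end EqualRevenue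

section Quantile

variable {μ : Measure ℝ} [IsProbabilityMeasure μ]

lemma quantileFn_le_iff {q : ℝ} (hq : q ∈ Ioo 0 1) (x : ℝ) :
    quantileFn μ q ≤ x ↔ q ≤ cdf μ x := by
  simp only [quantileFn, ← measureReal_def, ← cdf_eq_real]
  set S := {x | q ≤ cdf μ x}
  have hbdd : BddBelow S := by
    obtain ⟨a, ha⟩ := eventually_atBot.1 ((tendsto_cdf_atBot μ).eventually (gt_mem_nhds hq.1))
    exact ⟨a, fun y hy => le_of_not_gt fun hya => (ha y hya.le).not_ge hy⟩
  have hne : S.Nonempty :=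
    ((tendsto_cdf_atTop μ).eventually (lt_mem_nhds hq.2)).exists.imp fun _ h => h.le
  -- right-continuity of the cdf: the infimum is attained
  have hmem : sInf S ∈ S := by
    have : ∀ᶠ y in 𝓝[>] sInf S, q ≤ cdf μ y := by
      filter_upwards [self_mem_nhdsWithin] with y hy
      obtain ⟨s, hs, hsy⟩ := exists_lt_of_csInf_lt hne hy
      exact hs.trans (monotone_cdf μ hsy.le)
    exact ge_of_tendsto (((cdf μ).right_continuous _).mono Ioi_subset_Ici_self) this
  exact ⟨fun h => hmem.trans (monotone_cdf μ h), fun h => csInf_le hbdd h⟩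

lemma monotoneOn_quantileFn : MonotoneOn (quantileFn μ) (Ioo 0 1) :=
  fun _ hq _ hr hqr => (quantileFn_le_iff hq _).2 (hqr.trans ((quantileFn_le_iff hr _).1 le_rfl))

lemma aemeasurable_quantileFn : AEMeasurable (quantileFn μ) (volume.restrict (Icc 0 1)) := by
  rw [Measure.restrict_congr_set Ioo_ae_eq_Icc.symm]
  exact aemeasurable_restrict_of_monotoneOn measurableSet_Ioo monotoneOn_quantileFn

lemma map_quantileFn : (volume.restrict (Icc (0 : ℝ) 1)).map (quantileFn μ) = μ := by
  refine Measure.ext_of_Iic _ _ fun x => ?_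
  rw [Measure.map_apply_of_aemeasurable aemeasurable_quantileFn measurableSet_Iic,
    Measure.restrict_congr_set Ioo_ae_eq_Icc.symm, Measure.restrict_apply' measurableSet_Ioo,
    ← ofReal_cdf]
  have hset : quantileFn μ ⁻¹' Iic x ∩ Ioo 0 1 = {q | q ≤ cdf μ x} ∩ Ioo 0 1 := by
    ext q
    exact and_congr_left (quantileFn_le_iff · x)
  rw [hset]
  apply le_antisymm
  · calc _ ≤ volume (Icc 0 (cdf μ x)) := measure_mono fun q hq => ⟨hq.2.1.le, hq.1⟩
      _ = _ := by simp [Real.volume_Icc]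
  · calc _ = volume (Ioo 0 (cdf μ x)) := by simp [Real.volume_Ioo]
      _ ≤ volume ({q | q ≤ cdf μ x} ∩ Ioo 0 1) := measure_mono fun q hq =>
        ⟨hq.2.le, hq.1, hq.2.trans_le (cdf_le_one μ x)⟩

lemma quantileFn_le_inv_one_sub (htail : ∀ x, 1 ≤ x → μ (Ioi x) ≤ ENNReal.ofReal x⁻¹)
    {q : ℝ} (hq : q ∈ Ioo 0 1) : quantileFn μ q ≤ (1 - q)⁻¹ := by
  have h1q : 0 < 1 - q := sub_pos.2 hq.2
  have hx : 1 ≤ (1 - q)⁻¹ := one_le_inv₀ h1q |>.2 (by linarith [hq.1])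
  have htail' : μ.real (Ioi (1 - q)⁻¹) ≤ 1 - q := by
    have := htail _ hx
    rw [inv_inv] at this
    exact ENNReal.toReal_le_of_le_ofReal h1q.le this
  rw [quantileFn_le_iff hq, cdf_eq_real, ← compl_Ioi, probReal_compl_eq_one_sub measurableSet_Ioi]
  linarith

end Quantile

lemma measurableSet_exists_le_apply {ι : Type*} [Countable ι] (x : ℝ) :
    MeasurableSet {v : ι → ℝ | ∃ j, x ≤ v j} := by
  simp only [ofPred_exists]
  exact MeasurableSet.iUnion fun j => measurableSet_le measurable_const (measurable_pi_apply j)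

section Comonotonic

variable {n : ℕ} {marg : Fin n → Measure ℝ} [∀ j, IsProbabilityMeasure (marg j)]

lemma aemeasurable_comonotoneProfile :
    AEMeasurable (fun q j => quantileFn (marg j) q) (volume.restrict (Icc (0 : ℝ) 1)) :=
  aemeasurable_pi_lambda _ fun _ => aemeasurable_quantileFn

lemma comon_compatible : Compatible marg (comon marg) := by
  have : IsProbabilityMeasure (volume.restrict (Icc (0 : ℝ) 1)) := ⟨by simp⟩
  refine ⟨Measure.isProbabilityMeasure_map aemeasurable_comonotoneProfile, fun j => ?_⟩
  rw [comon, AEMeasurable.map_map_of_aemeasurable (measurable_pi_apply j).aemeasurable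
    aemeasurable_comonotoneProfile]
  exact map_quantileFn

lemma comon_exists_le_apply_le (htail : ∀ j x, 1 ≤ x → marg j (Ioi x) ≤ ENNReal.ofReal x⁻¹)
    {x : ℝ} (hx : 0 < x) : comon marg {v | ∃ j, x ≤ v j} ≤ ENNReal.ofReal x⁻¹ := by
  rw [comon, Measure.map_apply_of_aemeasurable aemeasurable_comonotoneProfile
      (measurableSet_exists_le_apply x),
    Measure.restrict_congr_set Ioo_ae_eq_Icc.symm, Measure.restrict_apply' measurableSet_Ioo]
  calc volume ((fun q j => quantileFn (marg j) q) ⁻¹' {v | ∃ j, x ≤ v j} ∩ Ioo 0 1)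
      _ ≤ volume (Icc (1 - x⁻¹) 1) := measure_mono fun q ⟨⟨j, hj⟩, hq⟩ => by
          have hxq : x ≤ (1 - q)⁻¹ := hj.trans (quantileFn_le_inv_one_sub (htail j) hq)
          have hqx : 1 - q ≤ x⁻¹ := (le_inv_comm₀ hx (sub_pos.2 hq.2)).1 hxq
          exact ⟨by linarith, hq.2.le⟩
      _ = ENNReal.ofReal x⁻¹ := by simp [Real.volume_Icc]

end Comonotonic

section Revenue

variable {n : ℕ}

def finitePrices (p : Fin n → ℝ≥0∞) : Finset ℝ≥0∞ := (Finset.univ.image p).filter (· ≠ ⊤)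

lemma ncard_finitePrices (p : Fin n → ℝ≥0∞) :
    {c : ℝ≥0∞ | c ≠ ⊤ ∧ ∃ i : Fin n, p i = c}.ncard = (finitePrices p).card := by
  rw [← ncard_coe_finset]
  congr
  ext c
  simp [finitePrices, and_comm]

lemma revenue_le_sum_finitePrices (B : BuyerRule n) (p : Fin n → ℝ≥0∞) (v : Fin n → ℝ) :
    B.revenue p v ≤ ∑ c ∈ finitePrices p, {v | ∃ j, c.toReal ≤ v j}.indicator (fun _ => c) v := by
  rcases hchoose : B.choose v p with _ | j
  · simp [BuyerRule.revenue, hchoose]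
  obtain ⟨hfin, hle⟩ := B.feasible v p j hchoose
  have hmem : p j ∈ finitePrices p := by simp [finitePrices, hfin]
  have hsold : v ∈ {v | ∃ l, (p j).toReal ≤ v l} := ⟨j, hle⟩
  calc B.revenue p v = {v | ∃ l, (p j).toReal ≤ v l}.indicator (fun _ => p j) v := by
        simp [BuyerRule.revenue, hchoose, indicator_of_mem hsold]
    _ ≤ _ := Finset.single_le_sum
        (f := fun c => {v | ∃ j, c.toReal ≤ v j}.indicator (fun _ => c) v) (fun _ _ => zero_le) hmem

lemma expRev_le_sum_finitePrices (B : BuyerRule n) (p : Fin n → ℝ≥0∞)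
    (F : Measure (Fin n → ℝ)) :
    expRev B p F ≤ ∑ c ∈ finitePrices p, c * F {v | ∃ j, c.toReal ≤ v j} := by
  calc expRev B p F
      ≤ ∫⁻ v, ∑ c ∈ finitePrices p, {v | ∃ j, c.toReal ≤ v j}.indicator (fun _ => c) v ∂F :=
        lintegral_mono (revenue_le_sum_finitePrices B p)
    _ = _ := by
        rw [lintegral_finsetSum _ fun c _ =>
          measurable_const.indicator (measurableSet_exists_le_apply _)]
        simp_rw [lintegral_indicator_const (measurableSet_exists_le_apply _)]

end Revenue

lemma expRev_comon_le_card {n : ℕ} (B : BuyerRule n) (p : Fin n → ℝ≥0∞)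
    {marg : Fin n → Measure ℝ} [∀ j, IsProbabilityMeasure (marg j)]
    (htail : ∀ j x, 1 ≤ x → marg j (Ioi x) ≤ ENNReal.ofReal x⁻¹) :
    expRev B p (comon marg) ≤ (finitePrices p).card := by
  refine (expRev_le_sum_finitePrices B p _).trans ?_
  rw [← nsmul_one, ← Finset.sum_const]
  refine Finset.sum_le_sum fun c hc => ?_
  have hc_top : c ≠ ⊤ := (Finset.mem_filter.1 hc).2
  rcases eq_or_ne c 0 with rfl | hc0
  · simp
  have hpos : 0 < c.toReal := ENNReal.toReal_pos hc0 hc_top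
  calc c * comon marg {v | ∃ j, c.toReal ≤ v j} ≤ c * ENNReal.ofReal c.toReal⁻¹ := by
        gcongr
        exact comon_exists_le_apply_le htail hpos
    _ = 1 := by
        rw [ENNReal.ofReal_inv_of_pos hpos, ENNReal.ofReal_toReal hc_top,
          ENNReal.mul_inv_cancel hc0 hc_top]

lemma Compatible.measure_eval_mem {n : ℕ} {marg : Fin n → Measure ℝ} {F : Measure (Fin n → ℝ)}
    (hF : Compatible marg F) (j : Fin n) {s : Set ℝ} (hs : MeasurableSet s) :
    F {v | v j ∈ s} = marg j s := by
  rw [← hF.2 j, Measure.map_apply (measurable_pi_apply j) hs]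
  rfl

section LowerBound

variable {n : ℕ}

/-- Two thirds of the cap `2 ^ (i + 2)` on the value of item `i`. -/
def capPricing (n : ℕ) : Fin n → ℝ≥0∞ := fun i => ENNReal.ofReal (2 ^ ((i : ℕ) + 3) / 3)

lemma sum_capped_le_price {v : Fin n → ℝ} (hv : ∀ j, v j ≤ 2 ^ ((j : ℕ) + 2)) {j : Fin n}
    (hj : ∀ l : Fin n, v l - 2 ^ ((l : ℕ) + 3) / 3 ≤ v j - 2 ^ ((j : ℕ) + 3) / 3) :
    ∑ i with v i = 2 ^ ((i : ℕ) + 2), (2 : ℝ) ^ ((i : ℕ) + 2) / 3 ≤ 2 ^ ((j : ℕ) + 3) / 3 := by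
  set s := Finset.univ.filter fun i : Fin n => v i = 2 ^ ((i : ℕ) + 2)
  rcases s.eq_empty_or_nonempty with hs | hs
  · rw [hs, Finset.sum_empty]
    positivity
  set L := s.max' hs
  have hvL : v L = 2 ^ ((L : ℕ) + 2) := (Finset.mem_filter.1 (s.max'_mem hs)).2
  -- the capped item `L` gives utility `2 ^ (L + 2) / 3`, which `j` must match
  have hLj : (2 : ℝ) ^ (L : ℕ) ≤ 2 ^ (j : ℕ) := by
    have hjL := hj L
    have hvj := hv j
    rw [hvL] at hjL
    simp only [pow_add] at hjL hvj
    linarith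
  have hgeom : ∑ i ∈ s, (2 : ℝ) ^ (i : ℕ) < 2 ^ ((L : ℕ) + 1) := by
    have := Nat.geomSum_lt le_rfl (s := s.map Fin.valEmbedding) (n := L + 1)
      (by simpa [Nat.lt_succ_iff] using fun i hi => s.le_max' i hi)
    rw [Finset.sum_map] at this
    exact_mod_cast this
  calc ∑ i ∈ s, (2 : ℝ) ^ ((i : ℕ) + 2) / 3 = 4 / 3 * ∑ i ∈ s, (2 : ℝ) ^ (i : ℕ) := by
        rw [Finset.mul_sum]
        congr with i
        ring
    _ ≤ 4 / 3 * 2 ^ ((L : ℕ) + 1) := by gcongr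
    _ ≤ 2 ^ ((j : ℕ) + 3) / 3 := by
        simp only [pow_succ] at hLj ⊢
        linarith

lemma sum_capped_le_revenue (B : BuyerRule n) {v : Fin n → ℝ}
    (hv : ∀ j, v j ≤ 2 ^ ((j : ℕ) + 2)) :
    ∑ i, {v : Fin n → ℝ | v i = 2 ^ ((i : ℕ) + 2)}.indicator
      (fun _ => ENNReal.ofReal (2 ^ ((i : ℕ) + 2) / 3)) v ≤ B.revenue (capPricing n) v := by
  have hprice (i : Fin n) : (capPricing n i).toReal = 2 ^ ((i : ℕ) + 3) / 3 :=
    ENNReal.toReal_ofReal (by positivity)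
  rcases hchoose : B.choose v (capPricing n) with _ | j
  · rw [BuyerRule.revenue, hchoose, Option.elim_none, nonpos_iff_eq_zero]
    refine Finset.sum_eq_zero fun i _ => indicator_of_notMem (fun hi => ?_) _
    have hbuys := B.active v (capPricing n) ⟨i, ENNReal.ofReal_ne_top, by
      rw [hprice, hi.out, pow_succ]
      linarith [pow_pos (two_pos (α := ℝ)) ((i : ℕ) + 2)]⟩
    simp [hchoose] at hbuys
  have hj (l : Fin n) := B.optimal v (capPricing n) j l hchoose ENNReal.ofReal_ne_top
  simp only [hprice] at hj
  calc ∑ i, {v : Fin n → ℝ | v i = 2 ^ ((i : ℕ) + 2)}.indicator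
        (fun _ => ENNReal.ofReal (2 ^ ((i : ℕ) + 2) / 3)) v
      = ENNReal.ofReal (∑ i with v i = 2 ^ ((i : ℕ) + 2), (2 : ℝ) ^ ((i : ℕ) + 2) / 3) := by
        rw [ENNReal.ofReal_sum_of_nonneg fun _ _ => by positivity, Finset.sum_filter]
        simp only [indicator_apply, mem_ofPred_eq]
    _ ≤ B.revenue (capPricing n) v := by
        simp only [BuyerRule.revenue, hchoose, Option.elim_some, capPricing]
        exact ENNReal.ofReal_le_ofReal (sum_capped_le_price hv hj)

lemma expRev_capPricing_ge (B : BuyerRule n) {F : Measure (Fin n → ℝ)}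
    (hF : Compatible (fun i : Fin n => erTrunc (2 ^ ((i : ℕ) + 2))) F) :
    (n : ℝ≥0∞) / 3 ≤ expRev B (capPricing n) F := by
  have hcapped : ∀ᵐ v ∂F, ∀ j : Fin n, v j ≤ 2 ^ ((j : ℕ) + 2) := by
    refine ae_all_iff.2 fun j => ae_iff.2 ?_
    simpa [not_le] using (hF.measure_eval_mem j measurableSet_Ioi).trans (erTrunc_Ioi_self _)
  have hmeas (i : Fin n) : MeasurableSet {v : Fin n → ℝ | v i = 2 ^ ((i : ℕ) + 2)} :=
    measurable_pi_apply i (measurableSet_singleton _)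
  have hatom (i : Fin n) :
      ENNReal.ofReal (2 ^ ((i : ℕ) + 2) / 3) * F {v | v i = 2 ^ ((i : ℕ) + 2)} = 3⁻¹ := by
    have hmarg := hF.measure_eval_mem i (measurableSet_singleton (2 ^ ((i : ℕ) + 2)))
    simp only [mem_singleton_iff] at hmarg
    rw [hmarg, erTrunc_singleton, ← ENNReal.ofReal_mul (by positivity),
      show (2 : ℝ) ^ ((i : ℕ) + 2) / 3 * (2 ^ ((i : ℕ) + 2))⁻¹ = 3⁻¹ by field_simp,
      ENNReal.ofReal_inv_of_pos three_pos, ENNReal.ofReal_ofNat]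
  calc (n : ℝ≥0∞) / 3
      = ∑ i : Fin n, ENNReal.ofReal (2 ^ ((i : ℕ) + 2) / 3) * F {v | v i = 2 ^ ((i : ℕ) + 2)} := by
        rw [Finset.sum_congr rfl fun i _ => hatom i, Finset.sum_const, Finset.card_univ,
          Fintype.card_fin, nsmul_eq_mul, div_eq_mul_inv]
    _ = ∫⁻ v, ∑ i, {v : Fin n → ℝ | v i = 2 ^ ((i : ℕ) + 2)}.indicator
          (fun _ => ENNReal.ofReal (2 ^ ((i : ℕ) + 2) / 3)) v ∂F := by
        rw [lintegral_finsetSum _ fun i _ => measurable_const.indicator (hmeas i)]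
        simp_rw [lintegral_indicator_const (hmeas _)]
    _ ≤ expRev B (capPricing n) F :=
        lintegral_mono_ae (hcapped.mono fun _ hv => sum_capped_le_revenue B hv)

end LowerBound

/-- Item `i : Fin n` is item `j = i + 1` of the paper, with cap `2 ^ (i + 2)`. -/
theorem few_distinct_prices_bound_for_truncated_equal_revenue
    (n : ℕ) (B : BuyerRule n)
    (marg : Fin n → Measure ℝ) (hmarg : ∀ i : Fin n, marg i = erTrunc ((2 : ℝ) ^ ((i : ℕ) + 2)))
    (k : ℕ) (p : Fin n → ℝ≥0∞)
    (hdistinct : ({c : ℝ≥0∞ | c ≠ ⊤ ∧ ∃ i : Fin n, p i = c}).ncard ≤ k) :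
    robustRev B marg p ≤ expRev B p (comon marg) ∧
    expRev B p (comon marg) ≤ (k : ℝ≥0∞) ∧
    (n : ℝ≥0∞) / 3 ≤ optRobust B marg := by
  obtain rfl : marg = fun i : Fin n => erTrunc ((2 : ℝ) ^ ((i : ℕ) + 2)) := funext hmarg
  have (i : Fin n) : IsProbabilityMeasure (erTrunc ((2 : ℝ) ^ ((i : ℕ) + 2))) :=
    isProbabilityMeasure_erTrunc (one_le_pow₀ one_le_two)
  refine ⟨iInf₂_le _ comon_compatible, ?_, ?_⟩
  · calc expRev B p (comon _) ≤ (finitePrices p).card :=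
          expRev_comon_le_card B p fun _ _ hx => erTrunc_Ioi_le hx
      _ ≤ k := by rw [← ncard_finitePrices]; exact_mod_cast hdistinct
  · exact le_iSup_of_le (capPricing n) (le_iInf₂ fun _ hF => expRev_capPricing_ge B hF)
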